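/- arXiv:2204.14168 — 3 statements merged into one kernel-verified Lean document; each statement's English description precedes it below -/
import Mathlib

section
/- Let u and v be vertices of a series-parallel dag such that the fork-path of u is a prefix of the fork-path of v. Then v ≼ u if and only if d(v) ≤ d(u). -/
/-- Series-parallel dag shapes: a single vertex, serial composition
(identifying the sink of `g1` with the source of `g2`), or parallel
composition (fresh source with edges to the sources of `g1`, `g2`, and a
fresh sink with edges from their sinks). -/
inductive SP : Type where
  | vert : SP
  | seq : SP → SP → SP
  | par : SP → SP → SP

/-- Non-source vertices of a series-parallel dag. -/
def NV : SP → Type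
  | .vert => Empty
  | .seq g1 g2 => NV g1 ⊕ NV g2
  | .par g1 g2 => ((Unit ⊕ NV g1) ⊕ (Unit ⊕ NV g2)) ⊕ Unit

/-- Vertices: the source, or a non-source vertex. -/
abbrev V (g : SP) : Type := Unit ⊕ NV g

/-- The (unique) source of a series-parallel dag. -/
def src (g : SP) : V g := Sum.inl ()

/-- Embedding of the first component of a serial composition. -/
def emb1 (g1 g2 : SP) : V g1 → V (.seq g1 g2)
  | .inl _ => Sum.inl ()
  | .inr n => Sum.inr (Sum.inl n)

/-- The (unique) sink of a series-parallel dag. -/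
def snk : (g : SP) → V g
  | .vert => Sum.inl ()
  | .seq g1 g2 =>
    match snk g2 with
    | .inl _ => emb1 g1 g2 (snk g1)
    | .inr n => Sum.inr (Sum.inr n)
  | .par _ _ => Sum.inr (Sum.inr ())

/-- Embedding of the second component of a serial composition:
the source of `g2` is identified with the sink of `g1`. -/
def emb2 (g1 g2 : SP) : V g2 → V (.seq g1 g2)
  | .inl _ => emb1 g1 g2 (snk g1)
  | .inr n => Sum.inr (Sum.inr n)

/-- Embedding of the left branch of a parallel composition. -/
def embL (g1 g2 : SP) (v : V g1) : V (.par g1 g2) := Sum.inr (Sum.inl (Sum.inl v))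

/-- Embedding of the right branch of a parallel composition. -/
def embR (g1 g2 : SP) (v : V g2) : V (.par g1 g2) := Sum.inr (Sum.inl (Sum.inr v))

/-- Edges of a series-parallel dag. -/
def Edge : (g : SP) → V g → V g → Prop
  | .vert, _, _ => False
  | .seq g1 g2, u, v =>
      (∃ a b, Edge g1 a b ∧ u = emb1 g1 g2 a ∧ v = emb1 g1 g2 b) ∨
      (∃ a b, Edge g2 a b ∧ u = emb2 g1 g2 a ∧ v = emb2 g1 g2 b)
  | .par g1 g2, u, v =>
      (∃ a b, Edge g1 a b ∧ u = embL g1 g2 a ∧ v = embL g1 g2 b) ∨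
      (∃ a b, Edge g2 a b ∧ u = embR g1 g2 a ∧ v = embR g1 g2 b) ∨
      (u = src (.par g1 g2) ∧ v = embL g1 g2 (src g1)) ∨
      (u = src (.par g1 g2) ∧ v = embR g1 g2 (src g2)) ∨
      (u = embL g1 g2 (snk g1) ∧ v = snk (.par g1 g2)) ∨
      (u = embR g1 g2 (snk g2) ∧ v = snk (.par g1 g2))

/-- `Reach g u v` (`u ≼ v`): there is a directed path (possibly empty) from `u` to `v`. -/
def Reach (g : SP) : V g → V g → Prop := Relation.ReflTransGen (Edge g)

/-- The dag-depth of a vertex (the length of a longest path ending at it),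
computed by the DePa rules: the source has depth 0; at a fork both children
have depth one greater; at a join the new vertex has depth
`1 + max` of the depths of the joining vertices. -/
def depth : (g : SP) → V g → ℕ
  | .vert, _ => 0
  | .seq _ _, .inl _ => 0
  | .seq g1 _, .inr (.inl n) => depth g1 (Sum.inr n)
  | .seq g1 g2, .inr (.inr n) => depth g1 (snk g1) + depth g2 (Sum.inr n)
  | .par _ _, .inl _ => 0
  | .par g1 _, .inr (.inl (.inl v)) => 1 + depth g1 v
  | .par _ g2, .inr (.inl (.inr v)) => 1 + depth g2 v
  | .par g1 g2, .inr (.inr _) => 1 + max (1 + depth g1 (snk g1)) (1 + depth g2 (snk g2))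

/-- The fork-path of a vertex, as a list of bits (`false` = L, `true` = R),
outermost fork first: the root has the empty path, a fork extends the path by
L and R for the two branches, and a join restores the common prefix. -/
def fpath : (g : SP) → V g → List Bool
  | .vert, _ => []
  | .seq _ _, .inl _ => []
  | .seq g1 _, .inr (.inl n) => fpath g1 (Sum.inr n)
  | .seq _ g2, .inr (.inr n) => fpath g2 (Sum.inr n)
  | .par _ _, .inl _ => []
  | .par g1 _, .inr (.inl (.inl v)) => false :: fpath g1 v
  | .par _ g2, .inr (.inl (.inr v)) => true :: fpath g2 v
  | .par _ _, .inr (.inr _) => []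

/-- Longest common prefix of two lists. -/
def lcp : List Bool → List Bool → List Bool
  | a :: as, b :: bs => if a = b then a :: lcp as bs else []
  | _, _ => []

/-! Reachability never decreases depth, and depth vanishes only at the source. Conversely, by
induction on the decomposition: in a serial composition every non-source vertex of the second
part is deeper than all of the first part, and reachable from it through the shared vertex; in a
parallel composition, the prefix condition keeps `u` and `v` in the same branch unless `u` is the
sink, which every vertex reaches. -/

theorem depth_inl (g : SP) (t : Unit) : depth g (.inl t) = 0 := by
  cases g <;> rfl

theorem depth_inr_pos (g : SP) (n : NV g) : 0 < depth g (.inr n) := by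
  induction g with
  | vert => exact n.elim
  | seq g1 g2 ih1 ih2 =>
    rcases n with n | n
    · exact ih1 n
    · exact Nat.lt_add_left _ (ih2 n)
  | par => rcases n with (_ | _) | _ <;> exact Nat.one_pos.trans_le (Nat.le_add_right 1 _)

theorem snk_seq (g1 g2 : SP) : snk (.seq g1 g2) = emb2 g1 g2 (snk g2) := by
  cases h : snk g2 <;> simp [snk, h, emb2]

theorem depth_emb1 (g1 g2 : SP) (x : V g1) :
    depth (.seq g1 g2) (emb1 g1 g2 x) = depth g1 x := by
  rcases x with t | _
  · exact (depth_inl _ ()).trans (depth_inl g1 t).symm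
  · rfl

theorem depth_emb2 (g1 g2 : SP) (x : V g2) :
    depth (.seq g1 g2) (emb2 g1 g2 x) = depth g1 (snk g1) + depth g2 x := by
  rcases x with t | _
  · rw [depth_inl, Nat.add_zero]
    exact depth_emb1 g1 g2 (snk g1)
  · rfl

section Embeddings

variable (g1 g2 : SP)

theorem edge_emb1 {a b : V g1} (e : Edge g1 a b) :
    Edge (.seq g1 g2) (emb1 g1 g2 a) (emb1 g1 g2 b) :=
  Or.inl ⟨a, b, e, rfl, rfl⟩

theorem edge_emb2 {a b : V g2} (e : Edge g2 a b) :
    Edge (.seq g1 g2) (emb2 g1 g2 a) (emb2 g1 g2 b) :=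
  Or.inr ⟨a, b, e, rfl, rfl⟩

theorem edge_embL {a b : V g1} (e : Edge g1 a b) :
    Edge (.par g1 g2) (embL g1 g2 a) (embL g1 g2 b) :=
  Or.inl ⟨a, b, e, rfl, rfl⟩

theorem edge_embR {a b : V g2} (e : Edge g2 a b) :
    Edge (.par g1 g2) (embR g1 g2 a) (embR g1 g2 b) :=
  Or.inr <| Or.inl ⟨a, b, e, rfl, rfl⟩

theorem edge_src_embL : Edge (.par g1 g2) (src _) (embL g1 g2 (src g1)) :=
  Or.inr <| Or.inr <| Or.inl ⟨rfl, rfl⟩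

theorem edge_src_embR : Edge (.par g1 g2) (src _) (embR g1 g2 (src g2)) :=
  Or.inr <| Or.inr <| Or.inr <| Or.inl ⟨rfl, rfl⟩

theorem edge_embL_snk : Edge (.par g1 g2) (embL g1 g2 (snk g1)) (snk _) :=
  Or.inr <| Or.inr <| Or.inr <| Or.inr <| Or.inl ⟨rfl, rfl⟩

theorem edge_embR_snk : Edge (.par g1 g2) (embR g1 g2 (snk g2)) (snk _) :=
  Or.inr <| Or.inr <| Or.inr <| Or.inr <| Or.inr ⟨rfl, rfl⟩

theorem reach_emb1 {a b : V g1} (h : Reach g1 a b) :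
    Reach (.seq g1 g2) (emb1 g1 g2 a) (emb1 g1 g2 b) :=
  Relation.ReflTransGen.lift _ (fun _ _ e => edge_emb1 g1 g2 e) _ _ h

theorem reach_emb2 {a b : V g2} (h : Reach g2 a b) :
    Reach (.seq g1 g2) (emb2 g1 g2 a) (emb2 g1 g2 b) :=
  Relation.ReflTransGen.lift _ (fun _ _ e => edge_emb2 g1 g2 e) _ _ h

theorem reach_embL {a b : V g1} (h : Reach g1 a b) :
    Reach (.par g1 g2) (embL g1 g2 a) (embL g1 g2 b) :=
  Relation.ReflTransGen.lift _ (fun _ _ e => edge_embL g1 g2 e) _ _ h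

theorem reach_embR {a b : V g2} (h : Reach g2 a b) :
    Reach (.par g1 g2) (embR g1 g2 a) (embR g1 g2 b) :=
  Relation.ReflTransGen.lift _ (fun _ _ e => edge_embR g1 g2 e) _ _ h

end Embeddings

theorem depth_le_of_edge {g : SP} {u v : V g} (e : Edge g u v) : depth g u ≤ depth g v := by
  induction g with
  | vert => exact e.elim
  | seq g1 g2 ih1 ih2 =>
    rcases e with ⟨a, b, e, rfl, rfl⟩ | ⟨a, b, e, rfl, rfl⟩
    · rw [depth_emb1, depth_emb1]
      exact ih1 e
    · rw [depth_emb2, depth_emb2]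
      exact Nat.add_le_add_left (ih2 e) _
  | par g1 g2 ih1 ih2 =>
    rcases e with ⟨a, b, e, rfl, rfl⟩ | ⟨a, b, e, rfl, rfl⟩ | ⟨rfl, rfl⟩ | ⟨rfl, rfl⟩ |
      ⟨rfl, rfl⟩ | ⟨rfl, rfl⟩
    · exact Nat.add_le_add_left (ih1 e) 1
    · exact Nat.add_le_add_left (ih2 e) 1
    all_goals
      simp only [depth, embL, embR, src, snk]
      omega

theorem Reach.depth_le {g : SP} {u v : V g} (h : Reach g u v) : depth g u ≤ depth g v := by
  induction h with
  | refl => exact le_rfl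
  | tail _ e ih => exact ih.trans (depth_le_of_edge e)

theorem reach_src (g : SP) (v : V g) : Reach g (src g) v := by
  induction g with
  | vert =>
    rcases v with ⟨⟩ | n
    · exact .refl
    · exact n.elim
  | seq g1 g2 ih1 ih2 =>
    rcases v with ⟨⟩ | n | n
    · exact .refl
    · exact reach_emb1 g1 g2 (ih1 (.inr n))
    · exact (reach_emb1 g1 g2 (ih1 (snk g1))).trans (reach_emb2 g1 g2 (ih2 (.inr n)))
  | par g1 g2 ih1 ih2 =>
    rcases v with ⟨⟩ | (a | a) | ⟨⟩
    · exact .refl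
    · exact .head (edge_src_embL g1 g2) (reach_embL g1 g2 (ih1 a))
    · exact .head (edge_src_embR g1 g2) (reach_embR g1 g2 (ih2 a))
    · exact .tail (.head (edge_src_embL g1 g2) (reach_embL g1 g2 (ih1 (snk g1))))
        (edge_embL_snk g1 g2)

theorem reach_snk (g : SP) (v : V g) : Reach g v (snk g) := by
  induction g with
  | vert =>
    rcases v with ⟨⟩ | n
    · exact .refl
    · exact n.elim
  | seq g1 g2 ih1 ih2 =>
    rw [snk_seq]
    rcases v with ⟨⟩ | n | n
    · exact (reach_emb1 g1 g2 (ih1 (src g1))).trans (reach_emb2 g1 g2 (ih2 (src g2)))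
    · exact (reach_emb1 g1 g2 (ih1 (.inr n))).trans (reach_emb2 g1 g2 (ih2 (src g2)))
    · exact reach_emb2 g1 g2 (ih2 (.inr n))
  | par g1 g2 ih1 ih2 =>
    rcases v with ⟨⟩ | (a | a) | ⟨⟩
    · exact .head (edge_src_embL g1 g2) (.tail (reach_embL g1 g2 (ih1 _)) (edge_embL_snk g1 g2))
    · exact .tail (reach_embL g1 g2 (ih1 a)) (edge_embL_snk g1 g2)
    · exact .tail (reach_embR g1 g2 (ih2 a)) (edge_embR_snk g1 g2)
    · exact .refl

def DepthDetectsReach (g : SP) : Prop :=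
  ∀ u v : V g, fpath g u <+: fpath g v → depth g v ≤ depth g u → Reach g v u

theorem DepthDetectsReach.of_inr {g : SP}
    (h : ∀ a b : NV g, fpath g (.inr a) <+: fpath g (.inr b) →
      depth g (.inr b) ≤ depth g (.inr a) → Reach g (.inr b) (.inr a)) :
    DepthDetectsReach g := by
  rintro (⟨⟩ | a) (⟨⟩ | b) hp hd
  · exact .refl
  · rw [depth_inl] at hd
    exact absurd hd (depth_inr_pos g b).not_ge
  · exact reach_src g _
  · exact h a b hp hd

theorem DepthDetectsReach.seq {g1 g2 : SP} (h1 : DepthDetectsReach g1)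
    (h2 : DepthDetectsReach g2) : DepthDetectsReach (.seq g1 g2) := by
  refine .of_inr fun a b hp hd => ?_
  rcases a with a | a <;> rcases b with b | b
  · exact reach_emb1 g1 g2 (h1 _ _ hp hd)
  · change depth g1 (snk g1) + depth g2 (.inr b) ≤ depth g1 (.inr a) at hd
    have := (reach_snk g1 (.inr a)).depth_le
    have := depth_inr_pos g2 b
    omega
  · change Reach _ (emb1 g1 g2 (.inr b)) (emb2 g1 g2 (.inr a))
    exact (reach_emb1 g1 g2 (reach_snk g1 _)).trans (reach_emb2 g1 g2 (reach_src g2 _))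
  · exact reach_emb2 g1 g2 (h2 _ _ hp (Nat.le_of_add_le_add_left hd))

theorem DepthDetectsReach.par {g1 g2 : SP} (h1 : DepthDetectsReach g1)
    (h2 : DepthDetectsReach g2) : DepthDetectsReach (.par g1 g2) := by
  refine .of_inr fun a b hp hd => ?_
  rcases a with (a | a) | ⟨⟩
  · rcases b with (b | b) | ⟨⟩
    · exact reach_embL g1 g2 (h1 a b (List.cons_prefix_cons.1 hp).2 (Nat.le_of_add_le_add_left hd))
    · exact nomatch (List.cons_prefix_cons.1 hp).1
    · exact absurd (List.prefix_nil.1 hp) (List.cons_ne_nil _ _)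
  · rcases b with (b | b) | ⟨⟩
    · exact nomatch (List.cons_prefix_cons.1 hp).1
    · exact reach_embR g1 g2 (h2 a b (List.cons_prefix_cons.1 hp).2 (Nat.le_of_add_le_add_left hd))
    · exact absurd (List.prefix_nil.1 hp) (List.cons_ne_nil _ _)
  · exact reach_snk _ _

theorem depthDetectsReach : ∀ g : SP, DepthDetectsReach g
  | .vert => .of_inr fun a => a.elim
  | .seq g1 g2 => (depthDetectsReach g1).seq (depthDetectsReach g2)
  | .par g1 g2 => (depthDetectsReach g1).par (depthDetectsReach g2)

/-- if the fork-path of `u` is a prefix of the fork-path of `v`,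
then `v ≼ u` iff `d(v) ≤ d(u)`. -/
theorem reach_rev_iff_depth_le_of_prefix (g : SP) (u v : V g)
    (h : fpath g u <+: fpath g v) :
    Reach g v u ↔ depth g v ≤ depth g u :=
  ⟨Reach.depth_le, depthDetectsReach g u v h⟩
end

section
/- In a series-parallel dag with the DePa labeling, two vertices u and v are equal if and only if they have the same fork-path and the same dag-depth. In other words, the pair (fork-path, dag-depth) uniquely identifies each vertex. -/
lemma depth_src_aux : ∀ (g : SP) (x : Unit), depth g (Sum.inl x) = 0 := by
  intro g x; cases g <;> rfl

lemma depth_pos : ∀ (g : SP) (n : NV g), 0 < depth g (Sum.inr n) := by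
  intro g
  induction g with
  | vert => intro n; exact n.elim
  | seq g1 g2 ih1 ih2 =>
    intro n
    cases n with
    | inl m => exact ih1 m
    | inr m => have := ih2 m; simp only [depth]; omega
  | par g1 g2 ih1 ih2 =>
    intro n
    rcases n with ((v | v) | v) <;> simp only [depth] <;> omega

lemma depth_snk_seq (g1 g2 : SP) :
    depth (.seq g1 g2) (snk (.seq g1 g2)) =
      depth g1 (snk g1) + depth g2 (snk g2) := by
  show depth (.seq g1 g2) (match snk g2 with
    | .inl _ => emb1 g1 g2 (snk g1)
    | .inr n => Sum.inr (Sum.inr n)) = _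
  rcases h2 : snk g2 with x | n
  · rcases h1 : snk g1 with y | m
    · simp [emb1, depth, depth_src_aux, h1]
    · simp [emb1, depth, depth_src_aux, h1]
  · simp [depth]

lemma depth_le_snk : ∀ (g : SP) (v : V g), depth g v ≤ depth g (snk g) := by
  intro g
  induction g with
  | vert =>
    intro v
    rcases v with x | n
    · exact Nat.le_refl _
    · exact n.elim
  | seq g1 g2 ih1 ih2 =>
    intro v
    rw [depth_snk_seq]
    rcases v with x | (n | n)
    · exact Nat.zero_le _
    · have := ih1 (Sum.inr n); simp only [depth]; omega
    · have := ih2 (Sum.inr n); simp only [depth]; omega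
  | par g1 g2 ih1 ih2 =>
    intro v
    rcases v with x | ((w | w) | w)
    · exact Nat.zero_le _
    · have := ih1 w; simp only [depth, snk]; omega
    · have := ih2 w; simp only [depth, snk]; omega
    · simp only [depth, snk]; omega

lemma fpath_depth_inj : ∀ (g : SP) (u v : V g),
    fpath g u = fpath g v → depth g u = depth g v → u = v := by
  intro g
  induction g with
  | vert =>
    intro u v _ _
    rcases u with x | n
    · rcases v with y | m
      · rfl
      · exact m.elim
    · exact n.elim
  | seq g1 g2 ih1 ih2 =>
    intro u v hf hd
    rcases u with x | (n | n) <;> rcases v with y | (m | m) <;>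
      simp only [depth, fpath, depth_src_aux] at hf hd
    · rfl
    · exact absurd hd (by have := depth_pos g1 m; omega)
    · exact absurd hd (by have := depth_pos g2 m; have := depth_le_snk g1 (snk g1); omega)
    · exact absurd hd (by have := depth_pos g1 n; omega)
    · have := ih1 (Sum.inr n) (Sum.inr m) hf hd
      simp_all
    · exact absurd hd (by
        have h1 := depth_le_snk g1 (Sum.inr n)
        have h2 := depth_pos g2 m
        omega)
    · exact absurd hd (by have := depth_pos g2 n; omega)
    · exact absurd hd (by
        have h1 := depth_le_snk g1 (Sum.inr m)
        have h2 := depth_pos g2 n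
        omega)
    · have := ih2 (Sum.inr n) (Sum.inr m) hf (by omega)
      simp_all
  | par g1 g2 ih1 ih2 =>
    intro u v hf hd
    rcases u with x | ((w | w) | w) <;> rcases v with y | ((z | z) | z) <;>
      simp only [depth, fpath] at hf hd
    · rfl
    · exact absurd hd (by omega)
    · exact absurd hd (by omega)
    · exact absurd hd (by omega)
    · exact absurd hd (by omega)
    · injection hf with h1 h2
      have := ih1 w z h2 (by omega)
      simp_all
    · simp at hf
    · simp at hf
    · exact absurd hd (by omega)
    · simp at hf
    · injection hf with h1 h2
      have := ih2 w z h2 (by omega)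
      simp_all
    · simp at hf
    · exact absurd hd (by omega)
    · simp at hf
    · simp at hf
    · rfl

/-- two vertices are equal iff they have the same fork-path and
the same dag-depth. -/
theorem eq_iff_fpath_eq_and_depth_eq (g : SP) (u v : V g) :
    u = v ↔ (fpath g u = fpath g v ∧ depth g u = depth g v) := by
  constructor
  · rintro rfl; exact ⟨rfl, rfl⟩
  · rintro ⟨hf, hd⟩; exact fpath_depth_inj g u v hf hd
end

section
/- Along any directed path in a series-parallel dag with the DePa labeling, the fork-paths of consecutive vertices differ by either appending one symbol (at a fork edge) or removing the last symbol (at a join edge). Consequently, for any directed path from u to v, some vertex on the path has fork-path equal to the longest common prefix of f(u) and f(v). -/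
lemma fpath_src' : ∀ (g : SP) (u : Unit), fpath g (Sum.inl u) = []
  | .vert, _ => rfl
  | .seq _ _, _ => rfl
  | .par _ _, _ => rfl

lemma fpath_emb1' (g1 g2 : SP) (v : V g1) :
    fpath (.seq g1 g2) (emb1 g1 g2 v) = fpath g1 v := by
  cases v with
  | inl u => simp [emb1, fpath_src']
  | inr n => rfl

lemma fpath_snk' : ∀ g : SP, fpath g (snk g) = []
  | .vert => rfl
  | .seq g1 g2 => by
    show fpath (.seq g1 g2) (snk (.seq g1 g2)) = []
    unfold snk
    cases h : snk g2 with
    | inl u =>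
      rw [fpath_emb1', fpath_snk' g1]
    | inr n =>
      have := fpath_snk' g2
      rw [h] at this
      exact this
  | .par g1 g2 => rfl

lemma fpath_emb2' (g1 g2 : SP) (v : V g2) :
    fpath (.seq g1 g2) (emb2 g1 g2 v) = fpath g2 v := by
  cases v with
  | inl u =>
    show fpath (.seq g1 g2) (emb1 g1 g2 (snk g1)) = fpath g2 (Sum.inl u)
    rw [fpath_emb1', fpath_snk', fpath_src']
  | inr n => rfl

lemma fpath_edge' : ∀ (g : SP) (u v : V g), Edge g u v →
    (∃ b, fpath g v = fpath g u ++ [b]) ∨ (∃ b, fpath g u = fpath g v ++ [b]) := by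
  intro g
  induction g with
  | vert => intro u v h; exact h.elim
  | seq g1 g2 ih1 ih2 =>
    rintro u v (⟨a, b, hab, rfl, rfl⟩ | ⟨a, b, hab, rfl, rfl⟩)
    · rw [fpath_emb1', fpath_emb1']; exact ih1 a b hab
    · rw [fpath_emb2', fpath_emb2']; exact ih2 a b hab
  | par g1 g2 ih1 ih2 =>
    rintro u v (⟨a, b, hab, rfl, rfl⟩ | ⟨a, b, hab, rfl, rfl⟩ |
      ⟨rfl, rfl⟩ | ⟨rfl, rfl⟩ | ⟨rfl, rfl⟩ | ⟨rfl, rfl⟩)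
    · rcases ih1 a b hab with ⟨c, h⟩ | ⟨c, h⟩
      · exact .inl ⟨c, by simp [embL, fpath, h]⟩
      · exact .inr ⟨c, by simp [embL, fpath, h]⟩
    · rcases ih2 a b hab with ⟨c, h⟩ | ⟨c, h⟩
      · exact .inl ⟨c, by simp [embR, fpath, h]⟩
      · exact .inr ⟨c, by simp [embR, fpath, h]⟩
    · exact .inl ⟨false, by simp [embL, src, fpath, fpath_src']⟩
    · exact .inl ⟨true, by simp [embR, src, fpath, fpath_src']⟩
    · exact .inr ⟨false, by simp [embL, snk, fpath, fpath_snk']⟩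
    · exact .inr ⟨true, by simp [embR, snk, fpath, fpath_snk']⟩

lemma lcp_prefix' {x w : List Bool} (h : x <+: w) : lcp x w = x := by
  induction x generalizing w with
  | nil => cases w <;> rfl
  | cons c xs ih =>
    obtain ⟨t, rfl⟩ := h
    simp [lcp, ih ⟨t, rfl⟩]

lemma lcp_self' (x : List Bool) : lcp x x = x := lcp_prefix' ⟨[], by simp⟩

lemma lcp_append_not_prefix' {x w : List Bool} (b : Bool) (h : ¬ x <+: w) :
    lcp (x ++ [b]) w = lcp x w := by
  induction x generalizing w with
  | nil => exact absurd List.nil_prefix h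
  | cons c xs ih =>
    cases w with
    | nil => rfl
    | cons d ws =>
      by_cases hcd : c = d
      · subst hcd
        have hnp : ¬ xs <+: ws := fun hp => h (List.cons_prefix_cons.mpr ⟨rfl, hp⟩)
        simp [lcp, ih hnp]
      · simp [lcp, hcd]

lemma lcp_prefix_not' {x w : List Bool} (b : Bool) (h1 : x <+: w)
    (h2 : ¬ (x ++ [b]) <+: w) : lcp (x ++ [b]) w = x := by
  induction x generalizing w with
  | nil =>
    cases w with
    | nil => rfl
    | cons d ws =>
      have hbd : b ≠ d := fun hbd => h2 (by
        subst hbd; exact List.cons_prefix_cons.mpr ⟨rfl, List.nil_prefix⟩)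
      simp [lcp, hbd]
  | cons c xs ih =>
    obtain ⟨t, rfl⟩ := h1
    have h2' : ¬ (xs ++ [b]) <+: (xs ++ t) := fun hp =>
      h2 (by simpa using List.cons_prefix_cons.mpr (⟨rfl, hp⟩ : c = c ∧ _))
    have := ih ⟨t, rfl⟩ h2'
    simpa [lcp] using this

lemma lcp_step' (a a' w : List Bool)
    (h : (∃ b, a' = a ++ [b]) ∨ (∃ b, a = a' ++ [b])) :
    lcp a w = a ∨ lcp a w = lcp a' w := by
  rcases h with ⟨b, rfl⟩ | ⟨b, rfl⟩
  · by_cases hp : a <+: w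
    · exact .inl (lcp_prefix' hp)
    · exact .inr (lcp_append_not_prefix' b hp).symm
  · by_cases hp : (a' ++ [b]) <+: w
    · exact .inl (lcp_prefix' hp)
    · by_cases hp' : a' <+: w
      · exact .inr (by rw [lcp_prefix_not' b hp' hp, lcp_prefix' hp'])
      · exact .inr (lcp_append_not_prefix' b hp')

lemma lcp_on_chain' {α : Type _} (f : α → List Bool) (R : α → α → Prop)
    (hstep : ∀ u v, R u v → (∃ b, f v = f u ++ [b]) ∨ (∃ b, f u = f v ++ [b])) :
    ∀ (l : List α) (u v : α), l.Chain' R → l.head? = some u → l.getLast? = some v →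
      ∃ c ∈ l, f c = lcp (f u) (f v) := by
  intro l
  induction l with
  | nil => intro u v _ h; simp at h
  | cons a t ih =>
    intro u v hch hh hl
    have hu : a = u := by simpa using hh
    subst hu
    cases t with
    | nil =>
      have hv : a = v := by simpa using hl
      subst hv
      exact ⟨a, by simp, (lcp_self' _).symm⟩
    | cons b t' =>
      have hch' := List.isChain_cons_cons.mp hch
      have hl' : (b :: t').getLast? = some v := by
        rw [← hl, List.getLast?_cons_cons]
      obtain ⟨c, hc, hfc⟩ := ih b v hch'.2 rfl hl'
      rcases lcp_step' (f a) (f b) (f v) (hstep a b hch'.1) with h | h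
      · exact ⟨a, by simp, h.symm⟩
      · exact ⟨c, List.mem_cons_of_mem _ hc, by rw [hfc, ← h]⟩

/-- along any edge, the fork-path changes by appending one symbol
or removing the last symbol; consequently, on any directed path from `u` to
`v` some vertex has fork-path `lcp (f u) (f v)`. -/
theorem fpath_step_and_lcp_on_path (g : SP) :
    (∀ u v : V g, Edge g u v →
      (∃ b, fpath g v = fpath g u ++ [b]) ∨ (∃ b, fpath g u = fpath g v ++ [b])) ∧
    (∀ (l : List (V g)) (u v : V g), l.Chain' (Edge g) →
      l.head? = some u → l.getLast? = some v →
      ∃ c ∈ l, fpath g c = lcp (fpath g u) (fpath g v)) :=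
  ⟨fpath_edge' g, lcp_on_chain' (fpath g) (Edge g) (fpath_edge' g)⟩
end
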